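/- Fix d ≥ 1 and reals p_1, …, p_d with 0 < p_i < 1/2 for all i. For α ∈ (0,1), let ρ(α) denote the unique positive solution of ∑_{i=1}^d p_i^{1+ρ}/(p_i(1-α)+α) = ∑_{i=1}^d p_i. Then ρ is strictly decreasing in α: if 0 < α_1 < α_2 < 1 then ρ(α_2) < ρ(α_1). (Higher correlation between the query and its planted neighbor yields a strictly smaller query-time exponent.) -/

import Mathlib

/-!
Each summand `p ^ (1 + ρ) / (p * (1 - α) + α)` is nonincreasing in `ρ` because `p < 1`, and
strictly decreasing in `α` because its denominator `p + α * (1 - p)` grows with `α`. So if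
`ρ₁ ≤ ρ₂`, the left-hand side of the exponent equation at `(α₂, ρ₂)` is strictly smaller than at
`(α₁, ρ₁)`, although both equal `∑ i, p i`.
-/

open Finset

lemma exponent_denom_pos {p α : ℝ} (hp₀ : 0 < p) (hp₁ : p ≤ 1) (hα : 0 ≤ α) :
    0 < p * (1 - α) + α := by
  nlinarith

lemma exponent_denom_lt {p α₁ α₂ : ℝ} (hp : p < 1) (hα : α₁ < α₂) :
    p * (1 - α₁) + α₁ < p * (1 - α₂) + α₂ := by
  nlinarith

lemma exponent_term_lt {p α₁ α₂ ρ₁ ρ₂ : ℝ} (hp₀ : 0 < p) (hp₁ : p < 1)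
    (hα₁ : 0 < α₁) (hα : α₁ < α₂) (hρ : ρ₁ ≤ ρ₂) :
    p ^ (1 + ρ₂) / (p * (1 - α₂) + α₂) < p ^ (1 + ρ₁) / (p * (1 - α₁) + α₁) := by
  have hden₁ := exponent_denom_pos hp₀ hp₁.le hα₁.le
  have hden₂ := exponent_denom_pos hp₀ hp₁.le (hα₁.trans hα).le
  calc p ^ (1 + ρ₂) / (p * (1 - α₂) + α₂)
      ≤ p ^ (1 + ρ₁) / (p * (1 - α₂) + α₂) :=
        div_le_div_of_nonneg_right
          (Real.rpow_le_rpow_of_exponent_ge hp₀ hp₁.le (by linarith)) hden₂.le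
    _ < p ^ (1 + ρ₁) / (p * (1 - α₁) + α₁) :=
        div_lt_div_of_pos_left (Real.rpow_pos_of_pos hp₀ _) hden₁ (exponent_denom_lt hp₁ hα)

lemma exponent_sum_lt {ι : Type*} [Fintype ι] [Nonempty ι] {p : ι → ℝ}
    (hp : ∀ i, 0 < p i ∧ p i < 1) {α₁ α₂ ρ₁ ρ₂ : ℝ}
    (hα₁ : 0 < α₁) (hα : α₁ < α₂) (hρ : ρ₁ ≤ ρ₂) :
    ∑ i, p i ^ (1 + ρ₂) / (p i * (1 - α₂) + α₂)
      < ∑ i, p i ^ (1 + ρ₁) / (p i * (1 - α₁) + α₁) :=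
  sum_lt_sum_of_nonempty univ_nonempty fun i _ =>
    exponent_term_lt (hp i).1 (hp i).2 hα₁ hα hρ

theorem rho_strictly_decreasing_in_alpha_general
    (d : ℕ) (hd : 1 ≤ d) (p : Fin d → ℝ)
    (hp : ∀ i, 0 < p i ∧ p i < 1 / 2)
    (α₁ α₂ : ℝ) (hα₁ : 0 < α₁) (hα₁₂ : α₁ < α₂)
    (ρ₁ ρ₂ : ℝ)
    (heq₁ : ∑ i, p i ^ (1 + ρ₁) / (p i * (1 - α₁) + α₁) = ∑ i, p i)
    (heq₂ : ∑ i, p i ^ (1 + ρ₂) / (p i * (1 - α₂) + α₂) = ∑ i, p i) :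
    ρ₂ < ρ₁ := by
  by_contra! hρ
  have : Nonempty (Fin d) := Fin.pos_iff_nonempty.mp hd
  have hp₁ : ∀ i, 0 < p i ∧ p i < 1 := fun i => ⟨(hp i).1, by linarith [(hp i).2]⟩
  exact (exponent_sum_lt hp₁ hα₁ hα₁₂ hρ).ne (heq₂.trans heq₁.symm)

/-- The exponent `ρ(α)` of Theorem 1 is strictly decreasing in the
correlation `α`: if `0 < α₁ < α₂ < 1` and `ρ₁, ρ₂ > 0` solve the
respective exponent equations, then `ρ₂ < ρ₁`. -/
theorem rho_strictly_decreasing_in_alpha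
    (d : ℕ) (hd : 1 ≤ d) (p : Fin d → ℝ)
    (hp : ∀ i, 0 < p i ∧ p i < 1 / 2)
    (α₁ α₂ : ℝ) (hα₁ : 0 < α₁) (hα₁₂ : α₁ < α₂) (hα₂ : α₂ < 1)
    (ρ₁ ρ₂ : ℝ) (hρ₁ : 0 < ρ₁) (hρ₂ : 0 < ρ₂)
    (heq₁ : ∑ i, p i ^ (1 + ρ₁) / (p i * (1 - α₁) + α₁) = ∑ i, p i)
    (heq₂ : ∑ i, p i ^ (1 + ρ₂) / (p i * (1 - α₂) + α₂) = ∑ i, p i) :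
    ρ₂ < ρ₁ :=
  rho_strictly_decreasing_in_alpha_general d hd p hp α₁ α₂ hα₁ hα₁₂ ρ₁ ρ₂ heq₁ heq₂
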